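/- arXiv:1906.07281 — 5 statements merged into one kernel-verified Lean document; each statement's English description precedes it below -/
import Mathlib

section
/- Let σ : ℝ² → ℝ³ be a C² parametrized surface with σ_u(u,v) and σ_v(u,v) linearly independent everywhere, let n = (σ_u × σ_v)/‖σ_u × σ_v‖ be the unit normal, and let Σ(u,v) be the 3×3 matrix with columns σ_u, σ_v, n. Let W(u,v) be the 2×2 Weingarten matrix defined by n_u = a σ_u + b σ_v, n_v = c σ_u + d σ_v with W = [[a, c],[b, d]]. Suppose u(t), v(t), r(t) are differentiable real functions such that the 2×2 matrix I − r(t) W(u(t),v(t)) is invertible for all t, and define c(t) = σ(u(t),v(t)) − r(t) n(u(t),v(t)). Then for all t, the column vector (u̇, v̇, ṙ)ᵀ equals the block-diagonal matrix diag((I − rW)⁻¹, −1) applied to Σ(u(t),v(t))⁻¹ ċ(t). -/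
/-- The cross product on `EuclideanSpace ℝ (Fin 3)`. -/
noncomputable def cross3 (a b : EuclideanSpace ℝ (Fin 3)) : EuclideanSpace ℝ (Fin 3) :=
  (EuclideanSpace.equiv (Fin 3) ℝ).symm
    (crossProduct ((EuclideanSpace.equiv (Fin 3) ℝ) a) ((EuclideanSpace.equiv (Fin 3) ℝ) b))

/-- The `3×3` matrix whose columns are `a`, `b`, `c`. -/
def frameMat (a b c : EuclideanSpace ℝ (Fin 3)) : Matrix (Fin 3) (Fin 3) ℝ :=
  Matrix.of fun i j => ![a i, b i, c i] j

/-- The block-diagonal `3×3` matrix with upper-left `2×2` block `M` and `(3,3)` entry `−1`. -/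
def blockDiag2 (M : Matrix (Fin 2) (Fin 2) ℝ) : Matrix (Fin 3) (Fin 3) ℝ :=
  Matrix.of ![![M 0 0, M 0 1, 0], ![M 1 0, M 1 1, 0], ![0, 0, -1]]

/-!
By the chain rule, `ċ = u̇ σ_u + v̇ σ_v − r (u̇ n_u + v̇ n_v) − ṙ n`, and expanding `n_u, n_v` with
the Weingarten matrix turns this into `ċ = Σ · diag(I − rW, −1) · (u̇, v̇, ṙ)ᵀ`. The frame `Σ` is
invertible since `det Σ = ‖σ_u × σ_v‖ ≠ 0`, so the claim follows on multiplying by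
`diag((I − rW)⁻¹, −1) Σ⁻¹`.
-/

open Matrix

local notation "E³" => EuclideanSpace ℝ (Fin 3)

section Partials

variable {E : Type*} [NormedAddCommGroup E] [NormedSpace ℝ E] {f : ℝ × ℝ → E} {p : ℝ × ℝ}

lemma DifferentiableAt.hasDerivAt_fst (hf : DifferentiableAt ℝ f p) :
    HasDerivAt (fun x => f (x, p.2)) (fderiv ℝ f p (1, 0)) p.1 :=
  hf.hasFDerivAt.comp_hasDerivAt p.1 ((hasDerivAt_id p.1).prodMk (hasDerivAt_const p.1 p.2))

lemma DifferentiableAt.hasDerivAt_snd (hf : DifferentiableAt ℝ f p) :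
    HasDerivAt (fun y => f (p.1, y)) (fderiv ℝ f p (0, 1)) p.2 :=
  hf.hasFDerivAt.comp_hasDerivAt p.2 ((hasDerivAt_const p.2 p.1).prodMk (hasDerivAt_id p.2))

lemma ContDiff.of_hasDerivAt_fst {k m : WithTop ℕ∞} {fu : ℝ × ℝ → E} (hf : ContDiff ℝ m f)
    (hkm : k + 1 ≤ m) (hfu : ∀ p, HasDerivAt (fun x => f (x, p.2)) (fu p) p.1) :
    ContDiff ℝ k fu := by
  have hfd := hf.differentiable (ne_bot_of_le_ne_bot (by simp) hkm)
  rw [show fu = fun p => fderiv ℝ f p (1, 0) from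
    funext fun p => (hfu p).unique (hfd p).hasDerivAt_fst]
  exact (hf.fderiv_right hkm).clm_apply contDiff_const

lemma ContDiff.of_hasDerivAt_snd {k m : WithTop ℕ∞} {fv : ℝ × ℝ → E} (hf : ContDiff ℝ m f)
    (hkm : k + 1 ≤ m) (hfv : ∀ p, HasDerivAt (fun y => f (p.1, y)) (fv p) p.2) :
    ContDiff ℝ k fv := by
  have hfd := hf.differentiable (ne_bot_of_le_ne_bot (by simp) hkm)
  rw [show fv = fun p => fderiv ℝ f p (0, 1) from
    funext fun p => (hfv p).unique (hfd p).hasDerivAt_snd]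
  exact (hf.fderiv_right hkm).clm_apply contDiff_const

lemma HasDerivAt.comp_of_partials {fu fv : E} {γ : ℝ → ℝ × ℝ} {γ' : ℝ × ℝ} {t : ℝ}
    (hγ : HasDerivAt γ γ' t) (hf : DifferentiableAt ℝ f (γ t))
    (hfu : HasDerivAt (fun x => f (x, (γ t).2)) fu (γ t).1)
    (hfv : HasDerivAt (fun y => f ((γ t).1, y)) fv (γ t).2) :
    HasDerivAt (fun s => f (γ s)) (γ'.1 • fu + γ'.2 • fv) t := by
  have hsplit : γ' = γ'.1 • ((1 : ℝ), (0 : ℝ)) + γ'.2 • ((0 : ℝ), (1 : ℝ)) := by simp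
  have := hf.hasFDerivAt.comp_hasDerivAt t hγ
  rwa [hsplit, map_add, map_smul, map_smul, ← hfu.unique hf.hasDerivAt_fst,
    ← hfv.unique hf.hasDerivAt_snd] at this

end Partials

lemma Differentiable.cross3 {F : Type*} [NormedAddCommGroup F] [NormedSpace ℝ F] {f g : F → E³}
    (hf : Differentiable ℝ f) (hg : Differentiable ℝ g) :
    Differentiable ℝ fun x => cross3 (f x) (g x) := by
  rw [differentiable_euclidean] at *
  intro i
  fin_cases i <;> simp [_root_.cross3, cross_apply] <;> fun_prop

lemma Differentiable.inv_norm_smul_self {F G : Type*} [NormedAddCommGroup F] [NormedSpace ℝ F]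
    [NormedAddCommGroup G] [InnerProductSpace ℝ G] {g : F → G} (hg : Differentiable ℝ g)
    (h0 : ∀ x, g x ≠ 0) : Differentiable ℝ fun x => ‖g x‖⁻¹ • g x := fun x =>
  (((hg x).norm ℝ (h0 x)).inv (norm_ne_zero_iff.mpr (h0 x))).smul (hg x)

lemma cross3_ne_zero {a b : E³} (h : LinearIndependent ℝ ![a, b]) : cross3 a b ≠ 0 := by
  have h' : LinearIndependent ℝ
      ![EuclideanSpace.equiv (Fin 3) ℝ a, EuclideanSpace.equiv (Fin 3) ℝ b] := by
    rw [LinearIndependent.pair_iff] at h ⊢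
    intro s t hst
    exact h s t ((EuclideanSpace.equiv (Fin 3) ℝ).injective (by simpa using hst))
  simpa [cross3] using crossProduct_ne_zero_iff_linearIndependent.mpr h'

lemma det_frameMat_cross3 (a b : E³) : (frameMat a b (cross3 a b)).det = ‖cross3 a b‖ ^ 2 := by
  rw [EuclideanSpace.real_norm_sq_eq]
  simp only [frameMat, cross3, cross_apply, det_fin_three, of_apply, cons_val_zero, cons_val_one,
    cons_val, Fin.sum_univ_three, PiLp.continuousLinearEquiv_apply,
    PiLp.continuousLinearEquiv_symm_apply]
  ring

lemma det_frameMat_smul_third (a b c : E³) (k : ℝ) :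
    (frameMat a b (k • c)).det = k * (frameMat a b c).det := by
  simp only [frameMat, det_fin_three, of_apply, cons_val_zero, cons_val_one, cons_val,
    PiLp.smul_apply, smul_eq_mul]
  ring

lemma det_frameMat_unitNormal (a b : E³) :
    (frameMat a b (‖cross3 a b‖⁻¹ • cross3 a b)).det = ‖cross3 a b‖ := by
  rw [det_frameMat_smul_third, det_frameMat_cross3]
  rcases eq_or_ne ‖cross3 a b‖ 0 with h | h
  · simp [h]
  · field_simp

lemma frameMat_mulVec (a b c : E³) (x : Fin 3 → ℝ) :
    frameMat a b c *ᵥ x = EuclideanSpace.equiv (Fin 3) ℝ (x 0 • a + x 1 • b + x 2 • c) := by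
  ext i
  simp only [frameMat, mulVec, dotProduct, of_apply, Fin.sum_univ_three, cons_val_zero,
    cons_val_one, cons_val, PiLp.continuousLinearEquiv_apply, PiLp.add_apply, PiLp.smul_apply,
    smul_eq_mul]
  ring

lemma blockDiag2_mulVec (M : Matrix (Fin 2) (Fin 2) ℝ) (x : Fin 3 → ℝ) :
    blockDiag2 M *ᵥ x = ![M 0 0 * x 0 + M 0 1 * x 1, M 1 0 * x 0 + M 1 1 * x 1, -x 2] := by
  ext i
  fin_cases i <;> simp [blockDiag2, mulVec, dotProduct, Fin.sum_univ_three]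

lemma blockDiag2_inv_mul_self {M : Matrix (Fin 2) (Fin 2) ℝ} (h : IsUnit M.det) :
    blockDiag2 M⁻¹ * blockDiag2 M = 1 := by
  have hM := (nonsing_inv_mul M h).symm
  rw [← Matrix.ext_iff] at hM
  simp only [mul_apply, one_apply, Fin.sum_univ_two, Fin.forall_fin_two] at hM
  ext i j
  fin_cases i <;> fin_cases j <;> simp [blockDiag2, mul_apply, Fin.sum_univ_three, ← hM]

lemma frameMat_mulVec_blockDiag2 {a b m na nb : E³} {W : Matrix (Fin 2) (Fin 2) ℝ}
    (hna : na = W 0 0 • a + W 1 0 • b) (hnb : nb = W 0 1 • a + W 1 1 • b) (ρ x y z : ℝ) :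
    frameMat a b m *ᵥ (blockDiag2 (1 - ρ • W) *ᵥ ![x, y, z]) =
      EuclideanSpace.equiv (Fin 3) ℝ (x • a + y • b - (ρ • (x • na + y • nb) + z • m)) := by
  rw [blockDiag2_mulVec, frameMat_mulVec, hna, hnb]
  congr 1
  simp only [Matrix.sub_apply, Matrix.smul_apply, one_apply, cons_val_zero, cons_val_one, cons_val,
    reduceIte, zero_ne_one, one_ne_zero, smul_eq_mul]
  module

/-- The tracking differential equation in `ℝ³`: for a `C²` immersed surface `σ` with unit
normal `n`, frame matrix `Σ = (σ_u, σ_v, n)`, Weingarten matrix `W`, and a curve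
`c(t) = σ(u(t), v(t)) − r(t) n(u(t), v(t))` with `I − r W` invertible, one has
`(u̇, v̇, ṙ)ᵀ = diag((I − rW)⁻¹, −1) Σ⁻¹ ċ`. -/
theorem tracking_ode_R3
    (σ : ℝ × ℝ → EuclideanSpace ℝ (Fin 3)) (hσ : ContDiff ℝ 2 σ)
    (σu σv : ℝ × ℝ → EuclideanSpace ℝ (Fin 3))
    (hσu : ∀ p : ℝ × ℝ, HasDerivAt (fun x => σ (x, p.2)) (σu p) p.1)
    (hσv : ∀ p : ℝ × ℝ, HasDerivAt (fun y => σ (p.1, y)) (σv p) p.2)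
    (hindep : ∀ p, LinearIndependent ℝ ![σu p, σv p])
    (n : ℝ × ℝ → EuclideanSpace ℝ (Fin 3))
    (hn : ∀ p, n p = ‖cross3 (σu p) (σv p)‖⁻¹ • cross3 (σu p) (σv p))
    (nu nv : ℝ × ℝ → EuclideanSpace ℝ (Fin 3))
    (hnu : ∀ p : ℝ × ℝ, HasDerivAt (fun x => n (x, p.2)) (nu p) p.1)
    (hnv : ∀ p : ℝ × ℝ, HasDerivAt (fun y => n (p.1, y)) (nv p) p.2)
    (W : ℝ × ℝ → Matrix (Fin 2) (Fin 2) ℝ)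
    (hW1 : ∀ p, nu p = W p 0 0 • σu p + W p 1 0 • σv p)
    (hW2 : ∀ p, nv p = W p 0 1 • σu p + W p 1 1 • σv p)
    (u v r : ℝ → ℝ)
    (hu : Differentiable ℝ u) (hv : Differentiable ℝ v) (hrd : Differentiable ℝ r)
    (hinv : ∀ t, IsUnit (1 - r t • W (u t, v t)))
    (c : ℝ → EuclideanSpace ℝ (Fin 3))
    (hc : ∀ t, c t = σ (u t, v t) - r t • n (u t, v t)) :
    ∀ t, ![deriv u t, deriv v t, deriv r t]
        = (blockDiag2 (1 - r t • W (u t, v t))⁻¹).mulVec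
            ((frameMat (σu (u t, v t)) (σv (u t, v t)) (n (u t, v t)))⁻¹.mulVec
              ((EuclideanSpace.equiv (Fin 3) ℝ) (deriv c t))) := by
  have hσd : Differentiable ℝ σ := hσ.differentiable (by norm_num)
  have hσud : Differentiable ℝ σu :=
    (hσ.of_hasDerivAt_fst (k := 1) (by norm_num) hσu).differentiable one_ne_zero
  have hσvd : Differentiable ℝ σv :=
    (hσ.of_hasDerivAt_snd (k := 1) (by norm_num) hσv).differentiable one_ne_zero
  have hcross : ∀ p, cross3 (σu p) (σv p) ≠ 0 := fun p => cross3_ne_zero (hindep p)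
  have hnd : Differentiable ℝ n := by
    rw [funext hn]
    exact (hσud.cross3 hσvd).inv_norm_smul_self hcross
  intro t
  set p : ℝ × ℝ := (u t, v t)
  have hγ : HasDerivAt (fun s => (u s, v s)) (deriv u t, deriv v t) t :=
    (hu t).hasDerivAt.prodMk (hv t).hasDerivAt
  have hc' : HasDerivAt c (deriv u t • σu p + deriv v t • σv p -
      (r t • (deriv u t • nu p + deriv v t • nv p) + deriv r t • n p)) t := by
    rw [funext hc]
    exact (hγ.comp_of_partials (hσd p) (hσu p) (hσv p)).sub
      ((hrd t).hasDerivAt.smul (hγ.comp_of_partials (hnd p) (hnu p) (hnv p)))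
  have hframe : IsUnit (frameMat (σu p) (σv p) (n p)).det := by
    rw [hn, det_frameMat_unitNormal]
    exact isUnit_iff_ne_zero.mpr (norm_ne_zero_iff.mpr (hcross p))
  have hM : IsUnit (1 - r t • W p).det := (isUnit_iff_isUnit_det _).mp (hinv t)
  rw [hc'.deriv, ← frameMat_mulVec_blockDiag2 (hW1 p) (hW2 p), mulVec_mulVec _ _⁻¹,
    nonsing_inv_mul _ hframe, one_mulVec, mulVec_mulVec, blockDiag2_inv_mul_self hM, one_mulVec]
end

section
/- Let z : ℝ → ℂ be a C² curve with |z'(s)| = 1, parametrized so that i z''(s) = −|z''(s)| z'(s) for all s (counterclockwise orientation of the boundary of a convex body). Let s(t), r(t) be differentiable with r(t) ≥ 0, and let c(t) = z(s(t)) − i r(t) z'(s(t)). Then the curve t ↦ z(s(t)) (the projection of c onto the boundary) is differentiable and | d/dt z(s(t)) | = |ċ_∥(t)| / (1 + r(t) |z''(s(t))|), where ċ_∥ = Re( ċ(t) conj(z'(s(t))) ) is the component of ċ along z'. -/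
/-!
Write `T = z' ∘ s` for the unit tangent along the projection and `k = |z''(s)|`. The orientation
hypothesis is the Frenet equation `z'' = i k z'`, so `Ṫ = ṡ i k T`, and differentiating
`c = z ∘ s − i r T` gives `ċ = (ṡ (1 + r k) − i ṙ) T`. Since `|T| = 1`, the tangential component
of `ċ` is `ṡ (1 + r k)`, while `d/dt z(s(t)) = ṡ T` has modulus `|ṡ|`; the factor `1 + r k` is
positive because `r ≥ 0`.
-/

open Complex

lemma eq_I_mul_ofReal_mul_of_I_mul_eq {v w : ℂ} {k : ℝ} (h : I * v = -(k : ℂ) * w) :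
    v = I * k * w := by
  linear_combination (-I) * h + v * I_sq

lemma mul_mul_conj_of_norm_eq_one (a : ℂ) {w : ℂ} (hw : ‖w‖ = 1) :
    a * w * starRingEnd ℂ w = a := by
  rw [mul_assoc, mul_conj', hw]
  simp

lemma HasDerivAt.sub_I_mul_ofReal_mul {p T : ℝ → ℂ} {r : ℝ → ℝ} {t a k r' : ℝ}
    (hp : HasDerivAt p (a * T t) t) (hT : HasDerivAt T (a * (I * k * T t)) t)
    (hr : HasDerivAt r r' t) :
    HasDerivAt (fun τ => p τ - I * r τ * T τ) ((a * (1 + r t * k) - I * r') * T t) t := by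
  refine (hp.sub ((hr.ofReal_comp.const_mul I).mul hT)).congr_deriv ?_
  linear_combination (-(a : ℂ) * r t * k * T t) * I_sq

/-- For a `C²` unit-speed counterclockwise boundary curve `z` (so that
`i z'' = −|z''| z'`), `r(t) ≥ 0`, and `c(t) = z(s(t)) − i r(t) z'(s(t))`, the projection
curve `t ↦ z(s(t))` is differentiable with
`|d/dt z(s(t))| = |ċ_∥| / (1 + r |z''|)`, where `ċ_∥ = Re(ċ ⋅ conj z')`. -/
theorem projection_speed_formula
    (z : ℝ → ℂ) (hz : ContDiff ℝ 2 z)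
    (hunit : ∀ u : ℝ, ‖deriv z u‖ = 1)
    (horient : ∀ u : ℝ,
      Complex.I * deriv (deriv z) u
        = -(‖deriv (deriv z) u‖ : ℂ) * deriv z u)
    (s r : ℝ → ℝ) (hs : Differentiable ℝ s) (hr : Differentiable ℝ r)
    (hrpos : ∀ t, 0 ≤ r t)
    (c : ℝ → ℂ)
    (hc : ∀ t, c t = z (s t) - Complex.I * (r t : ℂ) * deriv z (s t)) :
    Differentiable ℝ (fun t => z (s t)) ∧
    ∀ t, ‖deriv (fun τ => z (s τ)) t‖
        = |(deriv c t * starRingEnd ℂ (deriv z (s t))).re|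
            / (1 + r t * ‖deriv (deriv z) (s t)‖) := by
  have hz1 : Differentiable ℝ z := hz.differentiable (by norm_num)
  refine ⟨hz1.comp hs, fun t => ?_⟩
  set k := ‖deriv (deriv z) (s t)‖
  have hproj : HasDerivAt (fun τ => z (s τ)) (deriv s t * deriv z (s t)) t := by
    rw [← real_smul]
    exact (hz1 (s t)).hasDerivAt.scomp t (hs t).hasDerivAt
  have htangent : HasDerivAt (fun τ => deriv z (s τ)) (deriv s t * (I * k * deriv z (s t))) t := by
    rw [← eq_I_mul_ofReal_mul_of_I_mul_eq (horient (s t)), ← real_smul]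
    exact (hz.differentiable_deriv_two (s t)).hasDerivAt.scomp t (hs t).hasDerivAt
  have hvel : deriv c t = (deriv s t * (1 + r t * k) - I * deriv r t) * deriv z (s t) := by
    rw [funext hc]
    exact (hproj.sub_I_mul_ofReal_mul htangent (hr t).hasDerivAt).deriv
  have hden : 0 < 1 + r t * k :=
    add_pos_of_pos_of_nonneg one_pos (mul_nonneg (hrpos t) (norm_nonneg _))
  rw [hproj.deriv, hvel, mul_mul_conj_of_norm_eq_one _ (hunit (s t)), norm_mul, hunit (s t)]
  simp [abs_mul, abs_of_pos hden, hden.ne']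
end

section
/- Let K ⊆ ℝⁿ be a nonempty closed convex set with metric projection Π, let x ∉ K, θ = (x − Π(x))/‖x − Π(x)‖, and v ∈ ℝⁿ. Then, as t → 0⁺, ‖x + t v − Π(x + t v)‖ − ‖x − Π(x + t v)‖ = t θ · v + t ( (Π(x) − Π(x + t v)) / ‖x − Π(x)‖ ) · v + o(t). -/
open scoped RealInnerProductSpace
open Asymptotics Filter

/-!
With `q = Π(x + tv)` and `a = x - q`, the two inner-product terms add up to `⟪a, tv⟫ / ‖x - Π x‖`,
so the quantity is `‖a + tv‖ - ‖a‖ - ⟪a, tv⟫ / ‖x - Π x‖`. Cauchy–Schwarz and `‖a + b‖² = ‖a‖² + 2⟪a, b⟫ + ‖b‖²`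
give `‖a + b‖ - ‖a‖ = ⟪a, b⟫ / ‖a‖ + O(‖b‖² / ‖a‖)`, and the nearest-point property alone gives
`‖x - Π x‖ ≤ ‖a‖ ≤ ‖x - Π x‖ + 2t‖v‖`, so replacing `‖a‖` by `‖x - Π x‖` costs another `O(t²)`.
-/

section InnerProductSpace

variable {E : Type*} [SeminormedAddCommGroup E] [InnerProductSpace ℝ E]

theorem real_inner_le_norm_mul_norm_add_sub_norm (a b : E) :
    ⟪a, b⟫ ≤ ‖a‖ * (‖a + b‖ - ‖a‖) := by
  have h := real_inner_le_norm a (a + b)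
  rw [inner_add_right, real_inner_self_eq_norm_sq] at h
  linarith

theorem norm_mul_norm_add_sub_norm_le (a b : E) :
    ‖a‖ * (‖a + b‖ - ‖a‖) ≤ ⟪a, b⟫ + ‖b‖ ^ 2 / 2 := by
  -- `‖a‖ (‖a + b‖ - ‖a‖) - ⟪a, b⟫ = ‖b‖² / 2 - (‖a + b‖ - ‖a‖)² / 2`
  nlinarith [norm_add_sq_real a b, sq_nonneg (‖a + b‖ - ‖a‖)]

theorem abs_norm_add_sub_norm_sub_inner_div_le {a b : E} {d : ℝ} (hd : 0 < d)
    (hda : d ≤ ‖a‖) (had : ‖a‖ ≤ d + 2 * ‖b‖) :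
    |‖a + b‖ - ‖a‖ - ⟪a, b⟫ / d| ≤ 3 * ‖b‖ ^ 2 / d := by
  have ha : 0 < ‖a‖ := hd.trans_le hda
  have hsplit : ‖a‖ * (‖a + b‖ - ‖a‖ - ⟪a, b⟫ / d)
      = (‖a‖ * (‖a + b‖ - ‖a‖) - ⟪a, b⟫) + ⟪a, b⟫ * (d - ‖a‖) / d := by
    field_simp
    ring
  have hfirst : |‖a‖ * (‖a + b‖ - ‖a‖) - ⟪a, b⟫| ≤ ‖b‖ ^ 2 / 2 :=
    abs_le.2 ⟨by linarith [real_inner_le_norm_mul_norm_add_sub_norm a b, sq_nonneg ‖b‖],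
      by linarith [norm_mul_norm_add_sub_norm_le a b]⟩
  have hsecond : |⟪a, b⟫ * (d - ‖a‖) / d| ≤ ‖a‖ * ‖b‖ * (2 * ‖b‖) / d := by
    rw [abs_div, abs_mul, abs_of_pos hd, abs_sub_comm, abs_of_nonneg (sub_nonneg.2 hda)]
    gcongr
    · exact abs_real_inner_le_norm a b
    · linarith
  rw [← mul_le_mul_iff_of_pos_left ha, ← abs_of_pos ha, ← abs_mul, abs_of_pos ha, hsplit]
  calc _ ≤ ‖b‖ ^ 2 / 2 + ‖a‖ * ‖b‖ * (2 * ‖b‖) / d := (abs_add_le _ _).trans (add_le_add hfirst hsecond)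
    _ ≤ ‖a‖ * ‖b‖ ^ 2 / d + ‖a‖ * ‖b‖ * (2 * ‖b‖) / d := by
      have h : ‖b‖ ^ 2 / 2 ≤ ‖a‖ * ‖b‖ ^ 2 / d := by
        rw [le_div_iff₀ hd]
        nlinarith [sq_nonneg ‖b‖, mul_le_mul_of_nonneg_left hda (sq_nonneg ‖b‖)]
      linarith
    _ = ‖a‖ * (3 * ‖b‖ ^ 2 / d) := by ring

end InnerProductSpace

section NearestPoint

variable {α : Type*} [PseudoMetricSpace α] {K : Set α} {P : α → α}

theorem dist_le_dist_of_dist_eq_infDist {x y : α} (hy : P y ∈ K)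
    (hx : dist x (P x) = Metric.infDist x K) : dist x (P x) ≤ dist x (P y) :=
  hx ▸ Metric.infDist_le_dist_of_mem hy

theorem dist_le_dist_add_two_mul_of_dist_eq_infDist {x y : α} (hx : P x ∈ K)
    (hy : dist y (P y) = Metric.infDist y K) : dist x (P y) ≤ dist x (P x) + 2 * dist x y :=
  calc dist x (P y) ≤ dist x y + dist y (P y) := dist_triangle _ _ _
    _ ≤ dist x y + (dist y x + dist x (P x)) := by
      rw [hy]
      gcongr
      exact (Metric.infDist_le_dist_of_mem hx).trans (dist_triangle _ _ _)
    _ = dist x (P x) + 2 * dist x y := by rw [dist_comm y x]; ring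

end NearestPoint

theorem dist_to_moving_projection_expansion_general {n : ℕ}
    (K : Set (EuclideanSpace ℝ (Fin n)))
    (P : EuclideanSpace ℝ (Fin n) → EuclideanSpace ℝ (Fin n))
    (hPmem : ∀ x, P x ∈ K)
    (hPdist : ∀ x, dist x (P x) = Metric.infDist x K)
    (x : EuclideanSpace ℝ (Fin n)) (hx : x ∉ K)
    (v : EuclideanSpace ℝ (Fin n)) :
    (fun t : ℝ =>
        ‖x + t • v - P (x + t • v)‖ - ‖x - P (x + t • v)‖
          - t * ⟪‖x - P x‖⁻¹ • (x - P x), v⟫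
          - t * ⟪‖x - P x‖⁻¹ • (P x - P (x + t • v)), v⟫)
      =o[nhdsWithin 0 (Set.Ioi 0)] (fun t : ℝ => t) := by
  have hd : 0 < ‖x - P x‖ := norm_pos_iff.2 (sub_ne_zero.2 fun h => hx (h ▸ hPmem x))
  have hbound : ∀ t : ℝ, ‖‖x + t • v - P (x + t • v)‖ - ‖x - P (x + t • v)‖
      - t * ⟪‖x - P x‖⁻¹ • (x - P x), v⟫
      - t * ⟪‖x - P x‖⁻¹ • (P x - P (x + t • v)), v⟫‖ ≤ 3 * ‖v‖ ^ 2 / ‖x - P x‖ * ‖t ^ 2‖ := by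
    intro t
    set q := P (x + t • v)
    have hlow : ‖x - P x‖ ≤ ‖x - q‖ := by
      simpa only [dist_eq_norm] using dist_le_dist_of_dist_eq_infDist (hPmem _) (hPdist x)
    have hup : ‖x - q‖ ≤ ‖x - P x‖ + 2 * ‖t • v‖ := by
      simpa only [dist_eq_norm, sub_add_cancel_left, norm_neg] using
        dist_le_dist_add_two_mul_of_dist_eq_infDist (hPmem x) (hPdist (x + t • v))
    have hlinear : t * ⟪‖x - P x‖⁻¹ • (x - P x), v⟫ + t * ⟪‖x - P x‖⁻¹ • (P x - q), v⟫
        = ⟪x - q, t • v⟫ / ‖x - P x‖ := by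
      simp only [real_inner_smul_left, real_inner_smul_right]
      rw [← sub_add_sub_cancel x (P x) q, inner_add_left]
      ring
    have key := abs_norm_add_sub_norm_sub_inner_div_le hd hlow hup
    rw [norm_smul, Real.norm_eq_abs, ← add_sub_right_comm] at key
    rw [Real.norm_eq_abs, norm_pow, Real.norm_eq_abs, sub_sub, hlinear]
    exact key.trans_eq (by ring)
  exact ((IsBigO.of_bound _ (Eventually.of_forall hbound)).trans_isLittleO
    (isLittleO_pow_id one_lt_two)).mono nhdsWithin_le_nhds

/-- For `x ∉ K` with projection `Π` and `θ = (x − Π x)/‖x − Π x‖`, as `t → 0⁺`: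
`‖x + tv − Π(x + tv)‖ − ‖x − Π(x + tv)‖
   = t ⟪θ, v⟫ + t ⟪(Π x − Π(x + tv))/‖x − Π x‖, v⟫ + o(t)`. -/
theorem dist_to_moving_projection_expansion {n : ℕ}
    (K : Set (EuclideanSpace ℝ (Fin n)))
    (hKne : K.Nonempty) (hKcl : IsClosed K) (hKconv : Convex ℝ K)
    (P : EuclideanSpace ℝ (Fin n) → EuclideanSpace ℝ (Fin n))
    (hPmem : ∀ x, P x ∈ K)
    (hPdist : ∀ x, dist x (P x) = Metric.infDist x K)
    (x : EuclideanSpace ℝ (Fin n)) (hx : x ∉ K)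
    (v : EuclideanSpace ℝ (Fin n)) :
    (fun t : ℝ =>
        ‖x + t • v - P (x + t • v)‖ - ‖x - P (x + t • v)‖
          - t * ⟪‖x - P x‖⁻¹ • (x - P x), v⟫
          - t * ⟪‖x - P x‖⁻¹ • (P x - P (x + t • v)), v⟫)
      =o[nhdsWithin 0 (Set.Ioi 0)] (fun t : ℝ => t) :=
  dist_to_moving_projection_expansion_general K P hPmem hPdist x hx v
end

section
/- Let K ⊂ ℝ² be a compact convex polygon (the convex hull of a finite set of points) with nonempty interior, let Π be the metric projection onto K, and let c(t) = p + t w be a straight line with c(t) ∉ K for all t in an interval J. Then for every t₀ in the interior of J the one-sided derivative lim_{t→0⁺} (Π(c(t₀ + t)) − Π(c(t₀)))/t exists. -/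
/-!
The projection `P` onto the polygon `conv S` is piecewise affine. Call the points of `S` on the
supporting line at `P x` orthogonal to `x - P x` the active set of `x`. If `x₁` and `x₂` have the
same active set, then each `P xᵢ` lies in the face spanned by it, so `P x₂ - P x₁` is orthogonal to
both normals `xᵢ - P xᵢ`, and the variational inequality shows that `P` is affine on `[x₁, x₂]`.
Along the line `s ↦ p + s • w` only finitely many active sets occur, so one of them recurs at
parameters accumulating at `t₀` from the right; hence `P` is affine along the line on a right
neighbourhood of `t₀`, and since `P` is `1`-Lipschitz, hence continuous, the right derivative
exists.
-/

open Set Filter Topology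
open scoped InnerProductSpace

section ConvexHullFace

variable {𝕜 E : Type*} [Field 𝕜] [LinearOrder 𝕜] [IsStrictOrderedRing 𝕜] [AddCommGroup E]
  [Module 𝕜 E]

theorem mem_convexHull_inter_of_forall_le {S : Set E} {f : E →ₗ[𝕜] 𝕜} {r : 𝕜} {x : E}
    (hS : ∀ a ∈ S, f a ≤ r) (hx : x ∈ convexHull 𝕜 S) (hfx : f x = r) :
    x ∈ convexHull 𝕜 (S ∩ {a | f a = r}) := by
  classical
  obtain ⟨ι, _, w, z, hw₀, hw₁, hz, rfl⟩ := mem_convexHull_iff_exists_fintype.1 hx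
  have hsum : ∑ i, w i * (r - f (z i)) = 0 := by
    simp only [mul_sub, Finset.sum_sub_distrib, ← Finset.sum_mul, hw₁, one_mul, ← hfx, map_sum,
      map_smul, smul_eq_mul, sub_self]
  have hterm := (Finset.sum_eq_zero_iff_of_nonneg fun i _ =>
    mul_nonneg (hw₀ i) (sub_nonneg.2 (hS _ (hz i)))).1 hsum
  rw [← Finset.centerMass_eq_of_sum_1 _ _ hw₁, ← Finset.centerMass_filter_ne_zero]
  refine Finset.centerMass_mem_convexHull _ (fun i _ => hw₀ i) ?_ fun i hi => ⟨hz i, ?_⟩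
  · rw [Finset.sum_filter_ne_zero, hw₁]
    exact one_pos
  · have hwi : w i ≠ 0 := (Finset.mem_filter.1 hi).2
    have := (mul_eq_zero.1 (hterm i (Finset.mem_univ i))).resolve_left hwi
    exact (sub_eq_zero.1 this).symm

end ConvexHullFace

section Projection

variable {E : Type*} [NormedAddCommGroup E] [InnerProductSpace ℝ E]

theorem inner_sub_nonpos_of_dist_eq_infDist {K : Set E} (hK : Convex ℝ K) {x q : E} (hq : q ∈ K)
    (h : dist x q = Metric.infDist x K) : ∀ z ∈ K, ⟪x - q, z - q⟫_ℝ ≤ 0 := by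
  rw [Metric.infDist_eq_iInf] at h
  simp only [dist_eq_norm] at h
  exact (norm_eq_iInf_iff_real_inner_le_zero hK hq).1 h

theorem eq_of_inner_sub_nonpos {x q₁ q₂ : E} (h₁ : ⟪x - q₁, q₂ - q₁⟫_ℝ ≤ 0)
    (h₂ : ⟪x - q₂, q₁ - q₂⟫_ℝ ≤ 0) : q₁ = q₂ := by
  have hsq : ⟪q₂ - q₁, q₂ - q₁⟫_ℝ = ⟪x - q₁, q₂ - q₁⟫_ℝ + ⟪x - q₂, q₁ - q₂⟫_ℝ := by
    simp only [inner_sub_left, inner_sub_right, real_inner_comm]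
    ring
  have := real_inner_self_nonpos.1 (hsq ▸ add_nonpos h₁ h₂)
  exact (sub_eq_zero.1 this).symm

theorem lipschitzWith_one_of_inner_sub_nonpos {P : E → E}
    (h : ∀ x y, ⟪x - P x, P y - P x⟫_ℝ ≤ 0) : LipschitzWith 1 P := by
  refine LipschitzWith.mk_one fun x y => ?_
  have hsq : ‖P x - P y‖ ^ 2 ≤ ⟪x - y, P x - P y⟫_ℝ := by
    have e : ⟪x - y, P x - P y⟫_ℝ = ‖P x - P y‖ ^ 2
        - ⟪x - P x, P y - P x⟫_ℝ - ⟪y - P y, P x - P y⟫_ℝ := by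
      rw [← real_inner_self_eq_norm_sq]
      simp only [inner_sub_left, inner_sub_right, real_inner_comm]
      ring
    linarith [h x y, h y x]
  have := hsq.trans (real_inner_le_norm _ _)
  rw [dist_eq_norm, dist_eq_norm]
  nlinarith [norm_nonneg (P x - P y), norm_nonneg (x - y)]

theorem map_combo_eq_of_inner_eq_zero {K : Set E} (hK : Convex ℝ K) {P : E → E}
    (hPK : ∀ x, P x ∈ K) (hP : ∀ x, ∀ z ∈ K, ⟪x - P x, z - P x⟫_ℝ ≤ 0) {x₁ x₂ : E}
    (h₁ : ⟪x₁ - P x₁, P x₂ - P x₁⟫_ℝ = 0) (h₂ : ⟪x₂ - P x₂, P x₁ - P x₂⟫_ℝ = 0)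
    {a b : ℝ} (ha : 0 ≤ a) (hb : 0 ≤ b) (hab : a + b = 1) :
    P (a • x₁ + b • x₂) = a • P x₁ + b • P x₂ := by
  set x := a • x₁ + b • x₂
  set q := a • P x₁ + b • P x₂
  have hq : q ∈ K := hK (hPK x₁) (hPK x₂) ha hb hab
  -- `x - q` is the same combination of the normals `xᵢ - P xᵢ`, each orthogonal to `P x₂ - P x₁`
  have hsplit : ⟪x - q, P x - q⟫_ℝ
      = a * ⟪x₁ - P x₁, P x - P x₁⟫_ℝ + b * ⟪x₂ - P x₂, P x - P x₂⟫_ℝ := by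
    obtain rfl : a = 1 - b := by linarith
    simp only [x, q, inner_sub_left, inner_sub_right, inner_add_left, inner_add_right,
      inner_smul_left, inner_smul_right, RCLike.conj_to_real] at h₁ h₂ ⊢
    linear_combination (-(b * (1 - b))) * h₁ - b * (1 - b) * h₂
  refine eq_of_inner_sub_nonpos (hP x q hq) ?_
  rw [hsplit]
  exact add_nonpos (mul_nonpos_of_nonneg_of_nonpos ha (hP _ _ (hPK x)))
    (mul_nonpos_of_nonneg_of_nonpos hb (hP _ _ (hPK x)))

end Projection

section ActiveSet

variable {E : Type*} [NormedAddCommGroup E] [InnerProductSpace ℝ E]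

/-- When `q` is the projection of `x` onto `convexHull ℝ S`, the hull of these points is the face
of `convexHull ℝ S` exposed by `x - q`. -/
def activeSet (S : Set E) (x q : E) : Set E :=
  {a ∈ S | ⟪x - q, a⟫_ℝ = ⟪x - q, q⟫_ℝ}

theorem activeSet_subset {S : Set E} {x q : E} : activeSet S x q ⊆ S :=
  sep_subset _ _

theorem mem_convexHull_activeSet {S : Set E} {x q : E} (hq : q ∈ convexHull ℝ S)
    (h : ∀ a ∈ S, ⟪x - q, a - q⟫_ℝ ≤ 0) : q ∈ convexHull ℝ (activeSet S x q) :=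
  mem_convexHull_inter_of_forall_le (f := innerₛₗ ℝ (x - q))
    (fun a ha => show ⟪x - q, a⟫_ℝ ≤ ⟪x - q, q⟫_ℝ by simpa [inner_sub_right] using h a ha) hq rfl

theorem inner_sub_eq_zero_of_mem_convexHull_activeSet {S : Set E} {x q z : E}
    (hz : z ∈ convexHull ℝ (activeSet S x q)) : ⟪x - q, z - q⟫_ℝ = 0 := by
  have : ⟪x - q, z⟫_ℝ = ⟪x - q, q⟫_ℝ :=
    convexHull_min (fun a ha => ha.2) (convex_hyperplane (innerₛₗ ℝ (x - q)).isLinear _) hz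
  rw [inner_sub_right, this, sub_self]

theorem map_combo_eq_of_activeSet_eq {S : Set E} {P : E → E}
    (hPK : ∀ x, P x ∈ convexHull ℝ S) (hP : ∀ x, ∀ z ∈ convexHull ℝ S, ⟪x - P x, z - P x⟫_ℝ ≤ 0)
    {x₁ x₂ : E} (h : activeSet S x₁ (P x₁) = activeSet S x₂ (P x₂))
    {a b : ℝ} (ha : 0 ≤ a) (hb : 0 ≤ b) (hab : a + b = 1) :
    P (a • x₁ + b • x₂) = a • P x₁ + b • P x₂ := by
  have hmem : ∀ x, P x ∈ convexHull ℝ (activeSet S x (P x)) := fun x =>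
    mem_convexHull_activeSet (hPK x) fun a ha => hP x a (subset_convexHull ℝ S ha)
  exact map_combo_eq_of_inner_eq_zero (convex_convexHull ℝ S) hPK hP
    (inner_sub_eq_zero_of_mem_convexHull_activeSet (h ▸ hmem x₂))
    (inner_sub_eq_zero_of_mem_convexHull_activeSet (h ▸ hmem x₁)) ha hb hab

end ActiveSet

section Line

variable {F : Type*} [AddCommGroup F] [Module ℝ F]

theorem exists_eqOn_Icc_affine {φ : ℝ → F} {s₁ s₂ : ℝ}
    (h : ∀ a b : ℝ, 0 ≤ a → 0 ≤ b → a + b = 1 → φ (a * s₁ + b * s₂) = a • φ s₁ + b • φ s₂) :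
    ∃ u v : F, EqOn φ (fun τ => u + τ • v) (Icc s₁ s₂) := by
  rcases lt_or_ge s₁ s₂ with hlt | hge
  · have hd : 0 < s₂ - s₁ := sub_pos.2 hlt
    refine ⟨φ s₁ - s₁ • (s₂ - s₁)⁻¹ • (φ s₂ - φ s₁), (s₂ - s₁)⁻¹ • (φ s₂ - φ s₁), ?_⟩
    rintro τ ⟨hτ₁, hτ₂⟩
    have := h ((s₂ - τ) / (s₂ - s₁)) ((τ - s₁) / (s₂ - s₁)) (by positivity)
      (div_nonneg (sub_nonneg.2 hτ₁) hd.le) (by field_simp; ring)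
    rw [show (s₂ - τ) / (s₂ - s₁) * s₁ + (τ - s₁) / (s₂ - s₁) * s₂ = τ by field_simp; ring]
      at this
    rw [this]
    match_scalars <;> field_simp <;> ring
  · refine ⟨φ s₁, 0, fun τ hτ => ?_⟩
    rw [le_antisymm (hτ.2.trans hge) hτ.1]
    simp

theorem eq_and_eq_of_add_smul_eq_of_ne {u v u' v' : F} {s₁ s₂ : ℝ} (hs : s₁ ≠ s₂)
    (h₁ : u + s₁ • v = u' + s₁ • v') (h₂ : u + s₂ • v = u' + s₂ • v') : u = u' ∧ v = v' := by
  have hv : (s₂ - s₁) • (v - v') = 0 := by linear_combination (norm := module) h₂ - h₁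
  obtain rfl : v = v' := sub_eq_zero.1 ((smul_eq_zero.1 hv).resolve_left (sub_ne_zero.2 hs.symm))
  exact ⟨add_right_cancel h₁, rfl⟩

theorem exists_eventuallyEq_affine_nhdsGT {β : Type*} {f : ℝ → β} (hf : (range f).Finite)
    {φ : ℝ → F} (h : ∀ s₁ s₂, f s₁ = f s₂ → ∃ u v : F, EqOn φ (fun τ => u + τ • v) (Icc s₁ s₂))
    (x : ℝ) : ∃ u v : F, φ =ᶠ[𝓝[>] x] fun τ => u + τ • v := by
  obtain ⟨b, -, hb⟩ : ∃ b ∈ range f, ∃ᶠ s in 𝓝[>] x, f s = b :=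
    hf.frequently_exists.1 (Frequently.of_forall fun s => ⟨f s, mem_range_self s, rfl⟩)
  obtain ⟨s₂, hfs₂, hxs₂⟩ := (hb.and_eventually self_mem_nhdsWithin).exists
  obtain ⟨s₁, hfs₁, hxs₁, hs₁₂⟩ := (hb.and_eventually (Ioo_mem_nhdsGT hxs₂)).exists
  obtain ⟨u, v, huv⟩ := h s₁ s₂ (hfs₁.trans hfs₂.symm)
  refine ⟨u, v, ?_⟩
  filter_upwards [Ioo_mem_nhdsGT hxs₂] with τ ⟨hxτ, hτs₂⟩
  -- an earlier return of the same value gives an affine piece covering `τ`, `s₁` and `s₂`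
  obtain ⟨s, hfs, -, hs⟩ := (hb.and_eventually (Ioo_mem_nhdsGT (lt_min hxτ hxs₁))).exists
  obtain ⟨u', v', huv'⟩ := h s s₂ (hfs.trans hfs₂.symm)
  have hs₁ : s₁ ∈ Icc s s₂ := ⟨(hs.trans_le (min_le_right _ _)).le, hs₁₂.le⟩
  obtain ⟨rfl, rfl⟩ := eq_and_eq_of_add_smul_eq_of_ne hs₁₂.ne
    ((huv (left_mem_Icc.2 hs₁₂.le)).symm.trans (huv' hs₁))
    ((huv (right_mem_Icc.2 hs₁₂.le)).symm.trans (huv' (right_mem_Icc.2 (hs₁.1.trans hs₁.2))))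
  exact huv' ⟨(hs.trans_le (min_le_left _ _)).le, hτs₂.le⟩

end Line

section Derivative

variable {F : Type*} [NormedAddCommGroup F] [NormedSpace ℝ F]

theorem HasDerivWithinAt.tendsto_slope_zero_right {f : ℝ → F} {f' : F} {x : ℝ}
    (h : HasDerivWithinAt f f' (Ioi x) x) :
    Tendsto (fun t => t⁻¹ • (f (x + t) - f x)) (𝓝[>] 0) (𝓝 f') := by
  rw [hasDerivWithinAt_iff_tendsto_slope' self_notMem_Ioi, ← add_zero x,
    ← Filter.map_add_left_nhdsGT, tendsto_map'_iff] at h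
  simpa [slope, Function.comp_def] using h

theorem hasDerivWithinAt_Ioi_of_eventuallyEq_affine {φ : ℝ → F} {u v : F} {x : ℝ}
    (h : φ =ᶠ[𝓝[>] x] fun τ => u + τ • v) (hφ : ContinuousWithinAt φ (Ioi x) x) :
    HasDerivWithinAt φ v (Ioi x) x := by
  have haff : HasDerivAt (fun τ : ℝ => u + τ • v) v x := by
    simpa using ((hasDerivAt_id x).smul_const v).const_add u
  have hx : φ x = u + x • v :=
    tendsto_nhds_unique (hφ.congr' h) haff.continuousAt.continuousWithinAt
  exact haff.hasDerivWithinAt.congr_of_eventuallyEq h hx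

end Derivative

theorem polygon_projection_one_sided_deriv_exists_general
    (S : Set (EuclideanSpace ℝ (Fin 2))) (hSfin : S.Finite)
    (K : Set (EuclideanSpace ℝ (Fin 2))) (hK : K = convexHull ℝ S)
    (P : EuclideanSpace ℝ (Fin 2) → EuclideanSpace ℝ (Fin 2))
    (hP : ∀ y, P y ∈ K ∧ dist y (P y) = Metric.infDist y K)
    (p w : EuclideanSpace ℝ (Fin 2))
    (t₀ : ℝ) :
    ∃ L : EuclideanSpace ℝ (Fin 2),
      Filter.Tendsto
        (fun t : ℝ => t⁻¹ • (P (p + (t₀ + t) • w) - P (p + t₀ • w)))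
        (nhdsWithin 0 (Set.Ioi 0)) (nhds L) := by
  subst hK
  have hPK : ∀ y, P y ∈ convexHull ℝ S := fun y => (hP y).1
  have hPvi : ∀ y, ∀ z ∈ convexHull ℝ S, ⟪y - P y, z - P y⟫_ℝ ≤ 0 := fun y =>
    inner_sub_nonpos_of_dist_eq_infDist (convex_convexHull ℝ S) (hPK y) (hP y).2
  set φ : ℝ → EuclideanSpace ℝ (Fin 2) := fun s => P (p + s • w)
  have hφ : Continuous φ :=
    (lipschitzWith_one_of_inner_sub_nonpos fun x y => hPvi x _ (hPK y)).continuous.comp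
      (by fun_prop)
  have hpieces : ∀ s₁ s₂, activeSet S (p + s₁ • w) (φ s₁) = activeSet S (p + s₂ • w) (φ s₂) →
      ∃ u v, EqOn φ (fun τ => u + τ • v) (Icc s₁ s₂) := fun s₁ s₂ h =>
    exists_eqOn_Icc_affine fun a b ha hb hab => by
      have hline : p + (a * s₁ + b * s₂) • w = a • (p + s₁ • w) + b • (p + s₂ • w) := by
        obtain rfl : a = 1 - b := by linarith
        module
      simp only [φ, hline]
      exact map_combo_eq_of_activeSet_eq hPK hPvi h ha hb hab
  have hfin : (range fun s => activeSet S (p + s • w) (φ s)).Finite :=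
    hSfin.finite_subsets.subset (range_subset_iff.2 fun _ => activeSet_subset)
  obtain ⟨u, v, hev⟩ := exists_eventuallyEq_affine_nhdsGT hfin hpieces t₀
  exact ⟨v, (hasDerivWithinAt_Ioi_of_eventuallyEq_affine hev
    hφ.continuousWithinAt).tendsto_slope_zero_right⟩

/-- For a compact convex polygon `K ⊂ ℝ²` (convex hull of a finite set) with nonempty
interior, and a straight line `c(t) = p + t w` staying outside `K` on an interval `J`,
the one-sided derivative of `t ↦ Π(c(t))` exists at every interior point of `J`. -/
theorem polygon_projection_one_sided_deriv_exists
    (S : Set (EuclideanSpace ℝ (Fin 2))) (hSfin : S.Finite)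
    (K : Set (EuclideanSpace ℝ (Fin 2))) (hK : K = convexHull ℝ S)
    (hKint : (interior K).Nonempty)
    (P : EuclideanSpace ℝ (Fin 2) → EuclideanSpace ℝ (Fin 2))
    (hP : ∀ y, P y ∈ K ∧ dist y (P y) = Metric.infDist y K)
    (p w : EuclideanSpace ℝ (Fin 2))
    (J : Set ℝ) (hJ : J.OrdConnected)
    (hout : ∀ t ∈ J, p + t • w ∉ K)
    (t₀ : ℝ) (ht₀ : t₀ ∈ interior J) :
    ∃ L : EuclideanSpace ℝ (Fin 2),
      Filter.Tendsto
        (fun t : ℝ => t⁻¹ • (P (p + (t₀ + t) • w) - P (p + t₀ • w)))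
        (nhdsWithin 0 (Set.Ioi 0)) (nhds L) :=
  polygon_projection_one_sided_deriv_exists_general S hSfin K hK P hP p w t₀
end

section
/- Fix λ ∈ (0, 1) and C > 0 with Cλ ≤ π, and set α_n = Cλⁿ and A_n = e^{i α_n} ∈ ℂ for n ≥ 1. Let T_n be the midpoint of the segment [A_n, A_{n+1}], and let S_n be the point on the segment [A_{n−1}, A_n] with ‖A_n − S_n‖ = ‖A_n − T_n‖. Let r_n > 0 be the common value ‖O_n − S_n‖ = ‖O_n − T_n‖, where O_n is the (unique) point satisfying (O_n − S_n) ⟂ (A_n − A_{n−1}) and (O_n − T_n) ⟂ (A_{n+1} − A_n) (the center of the circle tangent to the segment [A_{n−1}, A_n] at S_n and to the segment [A_n, A_{n+1}] at T_n). Then lim_{n→∞} r_n exists and equals 2λ/(1 + λ). -/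
/-! If `S = P - d e` and `T = P + d f` with `e`, `f` unit vectors, the circle tangent to the lines
`PS` at `S` and `PT` at `T` has radius `ρ = d cot(θ/2)`, i.e. `ρ sin θ = d (1 + cos θ)`, where
`f · conj e = e^{-iθ}`. For consecutive chords of the unit circle at angles `β > γ > ε`, the point
`T` is at distance `d = sin((γ - ε)/2)` from `e^{iγ}` and the chords turn by `θ = (β - ε)/2`. With
`x = Cλᵐ` this gives `r_{m+1} = sin(a x)(1 + cos(b x)) / sin(b x)` for `a = λ(1 - λ)/2` and
`b = (1 - λ²)/2`, which tends to `2a/b = 2λ/(1 + λ)` as `x → 0`. -/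

open Complex ComplexConjugate Filter Topology

theorem exp_mul_I_sub_exp_mul_I (x y : ℝ) :
    exp (y * I) - exp (x * I) =
      (2 * Real.sin ((x - y) / 2) : ℝ) * (-I * exp (((x + y) / 2 : ℝ) * I)) := by
  have hx : (x : ℂ) * I = ((x + y) / 2 : ℝ) * I + ((x - y) / 2 : ℝ) * I := by push_cast; ring
  have hy : (y : ℂ) * I = ((x + y) / 2 : ℝ) * I - ((x - y) / 2 : ℝ) * I := by push_cast; ring
  rw [hx, hy, exp_add, exp_sub, ofReal_mul, ofReal_sin, Complex.sin, neg_mul, exp_neg]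
  push_cast
  set w := exp (((x + y) / 2 : ℂ) * I)
  set z := exp (((x - y) / 2 : ℂ) * I)
  linear_combination ((z⁻¹ - z) * w) * I_sq

theorem exp_mul_I_mul_conj_exp_mul_I (x y : ℝ) :
    exp (x * I) * conj (exp (y * I)) = exp ((x - y : ℝ) * I) := by
  rw [← exp_conj, map_mul, conj_ofReal, conj_I, ← exp_add]
  push_cast
  ring_nf

theorem norm_neg_I_mul_exp_mul_I (x : ℝ) : ‖-I * exp (x * I)‖ = 1 := by
  rw [norm_mul, norm_neg, norm_I, norm_exp_ofReal_mul_I, one_mul]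

theorem re_mul_conj_ofReal_mul (z w : ℂ) (c : ℝ) :
    (z * conj (c * w)).re = c * (z * conj w).re := by
  rw [map_mul, conj_ofReal, mul_left_comm, re_ofReal_mul]

theorem smul_sub_eq_smul_sub_of_mem_segment {E : Type*} [NormedAddCommGroup E]
    [NormedSpace ℝ E] {X P S : E} (h : S ∈ segment ℝ X P) :
    ‖P - X‖ • (P - S) = ‖P - S‖ • (P - X) := by
  have hray : SameRay ℝ (P - S) (P - S + (S - X)) :=
    (SameRay.refl _).add_right (mem_segment_iff_sameRay.mp h).symm
  rw [sub_add_sub_cancel] at hray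
  exact hray.norm_smul_eq.symm

theorem tangent_circle_radius_mul_abs_im_eq {P S T O e f : ℂ} {d : ℝ}
    (he : ‖e‖ = 1) (hf : ‖f‖ = 1) (hS : P - S = d * e) (hT : T - P = d * f)
    (hOS : ((O - S) * conj e).re = 0) (hOT : ((O - T) * conj f).re = 0) :
    ‖O - T‖ * |(f * conj e).im| = |d| * (1 + (f * conj e).re) := by
  set b := ((O - T) * conj f).im
  have hf' : f * conj f = 1 := by rw [mul_conj, normSq_eq_norm_sq, hf]; simp
  have he' : e * conj e = 1 := by rw [mul_conj, normSq_eq_norm_sq, he]; simp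
  have hOT' : O - T = b * I * f := by
    have : (O - T) * conj f = b * I := by
      apply Complex.ext <;> simp [b, hOT]
    linear_combination f * this - (O - T) * hf'
  set w := f * conj e with hw
  -- `O - T ⟂ f` gives `O - T = b i f`; now project `O - S = b i f + d f + d e` onto `e`.
  have hb : b * w.im = d * (1 + w.re) := by
    have h : (b * I * w + d * w + d).re = 0 := by
      rw [← hOS]; congr 1
      linear_combination (-conj e) * hOT' - conj e * hT - conj e * hS - d * he'
    simp only [add_re, mul_re, mul_im, I_re, I_im, ofReal_re, ofReal_im] at h
    linarith
  have hre : 0 ≤ 1 + w.re := by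
    have : |w.re| ≤ 1 := by
      simpa [hw, he, hf] using abs_re_le_norm w
    linarith [abs_le.mp this]
  rw [hOT', norm_mul, norm_mul, norm_I, hf, norm_real, Real.norm_eq_abs, ← abs_of_nonneg hre,
    ← abs_mul, ← hb, abs_mul]
  ring

theorem chord_tangent_circle_radius_mul_sin_eq {β γ ε : ℝ} (hβγ : γ < β) (hγε : ε < γ)
    (hβε : β - ε < 2 * Real.pi) {S T O : ℂ}
    (hT : T = (exp (γ * I) + exp (ε * I)) / 2)
    (hS : S ∈ segment ℝ (exp (β * I)) (exp (γ * I)))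
    (hST : ‖exp (γ * I) - S‖ = ‖exp (γ * I) - T‖)
    (hOS : ((O - S) * conj (exp (γ * I) - exp (β * I))).re = 0)
    (hOT : ((O - T) * conj (exp (ε * I) - exp (γ * I))).re = 0) :
    ‖O - T‖ * Real.sin ((β - ε) / 2) =
      Real.sin ((γ - ε) / 2) * (1 + Real.cos ((β - ε) / 2)) := by
  have hp : 0 < Real.sin ((β - γ) / 2) := Real.sin_pos_of_pos_of_lt_pi (by linarith) (by linarith)
  have hq : 0 < Real.sin ((γ - ε) / 2) := Real.sin_pos_of_pos_of_lt_pi (by linarith) (by linarith)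
  have hy : 0 < Real.sin ((β - ε) / 2) := Real.sin_pos_of_pos_of_lt_pi (by linarith) (by linarith)
  have hu := exp_mul_I_sub_exp_mul_I β γ
  have hv := exp_mul_I_sub_exp_mul_I γ ε
  set e := -I * exp (((β + γ) / 2 : ℝ) * I)
  set f := -I * exp (((γ + ε) / 2 : ℝ) * I)
  set d := Real.sin ((γ - ε) / 2)
  set c := 2 * Real.sin ((β - γ) / 2)
  have hc : 0 < c := mul_pos two_pos hp
  have hv' : exp (ε * I) - exp (γ * I) = 2 * d * f := by rw [hv]; push_cast; ring
  have hTP : T - exp (γ * I) = d * f := by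
    rw [hT]; linear_combination hv' / 2
  have hPT : ‖exp (γ * I) - T‖ = d := by
    rw [← norm_neg, neg_sub, hTP, norm_mul, norm_real, norm_neg_I_mul_exp_mul_I,
      Real.norm_of_nonneg hq.le, mul_one]
  have hPS : exp (γ * I) - S = d * e := by
    have h := smul_sub_eq_smul_sub_of_mem_segment hS
    rw [hST, hPT, hu, norm_mul, norm_real, norm_neg_I_mul_exp_mul_I, mul_one,
      Real.norm_of_nonneg hc.le, real_smul, real_smul] at h
    apply mul_left_cancel₀ (ofReal_ne_zero.mpr hc.ne')
    linear_combination h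
  have hfe : f * conj e = exp ((-((β - ε) / 2) : ℝ) * I) := by
    have h := exp_mul_I_mul_conj_exp_mul_I ((γ + ε) / 2) ((β + γ) / 2)
    rw [show (γ + ε) / 2 - (β + γ) / 2 = -((β - ε) / 2) by ring] at h
    rw [← h]
    simp only [e, f, map_mul, map_neg, conj_I]
    linear_combination
      (-exp (((γ + ε) / 2 : ℝ) * I) * conj (exp (((β + γ) / 2 : ℝ) * I))) * I_sq
  have key := tangent_circle_radius_mul_abs_im_eq (norm_neg_I_mul_exp_mul_I _)
    (norm_neg_I_mul_exp_mul_I _) hPS hTP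
    (by rwa [hu, re_mul_conj_ofReal_mul, mul_eq_zero, or_iff_right hc.ne'] at hOS)
    (by rwa [hv', ← ofReal_ofNat, ← ofReal_mul, re_mul_conj_ofReal_mul, mul_eq_zero,
      or_iff_right (by positivity)] at hOT)
  rwa [hfe, exp_ofReal_mul_I_re, exp_ofReal_mul_I_im, Real.sin_neg, Real.cos_neg, abs_neg,
    abs_of_pos hy, abs_of_pos hq] at key

theorem Real.mul_sinc (x : ℝ) : x * Real.sinc x = Real.sin x := by
  rcases eq_or_ne x 0 with rfl | hx
  · simp
  · rw [Real.sinc_of_ne_zero hx, mul_div_cancel₀ _ hx]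

theorem tendsto_sin_mul_mul_one_add_cos_div_sin (a : ℝ) {b : ℝ} (hb : b ≠ 0) :
    Tendsto (fun x => Real.sin (a * x) * (1 + Real.cos (b * x)) / Real.sin (b * x))
      (𝓝[≠] 0) (𝓝 (2 * a / b)) := by
  have hcont : ContinuousAt
      (fun x => a * Real.sinc (a * x) * (1 + Real.cos (b * x)) / (b * Real.sinc (b * x))) 0 :=
    ContinuousAt.div (by fun_prop) (by fun_prop) (by simp [hb])
  have hval : a * Real.sinc (a * 0) * (1 + Real.cos (b * 0)) / (b * Real.sinc (b * 0)) =
      2 * a / b := by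
    simp only [mul_zero, Real.sinc_zero, Real.cos_zero]; ring
  refine (hval ▸ hcont.tendsto.mono_left nhdsWithin_le_nhds).congr' ?_
  filter_upwards [self_mem_nhdsWithin] with x (hx : x ≠ 0)
  rw [← Real.mul_sinc (a * x), ← Real.mul_sinc (b * x)]
  field_simp

theorem radius_of_curvature_limit_general (l C : ℝ)
    (hl : l ∈ Set.Ioo (0 : ℝ) 1) (hC : 0 < C)
    (α : ℕ → ℝ) (hα : ∀ n, α n = C * l ^ n)
    (A : ℕ → ℂ) (hA : ∀ n, A n = Complex.exp (α n * Complex.I))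
    (T : ℕ → ℂ) (hT : ∀ n, T n = (A n + A (n + 1)) / 2)
    (S : ℕ → ℂ)
    (hS : ∀ n, 1 ≤ n → S n ∈ segment ℝ (A (n - 1)) (A n) ∧ ‖A n - S n‖ = ‖A n - T n‖)
    (O : ℕ → ℂ)
    (hO : ∀ n, 1 ≤ n →
      ((O n - S n) * starRingEnd ℂ (A n - A (n - 1))).re = 0 ∧
      ((O n - T n) * starRingEnd ℂ (A (n + 1) - A n)).re = 0)
    (r : ℕ → ℝ)
    (hr : ∀ n, 1 ≤ n → 0 < r n ∧ r n = ‖O n - S n‖ ∧ r n = ‖O n - T n‖) :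
    Filter.Tendsto r Filter.atTop (nhds (2 * l / (1 + l))) := by
  obtain ⟨hl0, hl1⟩ := hl
  set a := l * (1 - l) / 2
  set b := (1 - l ^ 2) / 2
  have hb : 0 < b := by simp only [b]; nlinarith
  have hα_lt (m : ℕ) : α (m + 1) < α m := by
    rw [hα, hα]
    exact mul_lt_mul_of_pos_left (pow_lt_pow_right_of_lt_one₀ hl0 hl1 m.lt_succ_self) hC
  have hx : Tendsto (fun m => C * l ^ m) atTop (𝓝 0) := by
    simpa using (tendsto_pow_atTop_nhds_zero_of_lt_one hl0.le hl1).const_mul C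
  have hlim := (tendsto_sin_mul_mul_one_add_cos_div_sin a hb.ne').comp
    (tendsto_nhdsWithin_of_tendsto_nhds_of_eventually_within _ hx
      (Eventually.of_forall fun m => (by positivity : 0 < C * l ^ m).ne'))
  rw [show 2 * a / b = 2 * l / (1 + l) by field_simp; ring] at hlim
  rw [← tendsto_add_atTop_iff_nat 1]
  refine hlim.congr' ?_
  filter_upwards [(hx.const_mul b).eventually (gt_mem_nhds (by simpa using Real.pi_pos))]
    with m hm
  obtain ⟨hSseg, hST⟩ := hS (m + 1) (by omega)
  obtain ⟨hOS, hOT⟩ := hO (m + 1) (by omega)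
  rw [Nat.add_sub_cancel] at hSseg hOS
  have hβε : (α m - α (m + 2)) / 2 = b * (C * l ^ m) := by rw [hα, hα]; ring
  have hγε : (α (m + 1) - α (m + 2)) / 2 = a * (C * l ^ m) := by rw [hα, hα]; ring
  have key := chord_tangent_circle_radius_mul_sin_eq (S := S (m + 1)) (T := T (m + 1))
    (O := O (m + 1)) (hα_lt m) (hα_lt (m + 1))
    (by linear_combination 2 * hβε + 2 * hm) (by rw [hT, hA, hA])
    (by rwa [← hA, ← hA]) (by rwa [← hA]) (by rwa [← hA, ← hA]) (by rwa [← hA, ← hA])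
  rw [hβε, hγε] at key
  have hsin : 0 < Real.sin (b * (C * l ^ m)) := Real.sin_pos_of_pos_of_lt_pi (by positivity) hm
  rw [Function.comp_apply, (hr (m + 1) (by omega)).2.2, div_eq_iff hsin.ne', key]

/-- The radius-of-curvature limit in the modified Shapiro construction: with
`α_n = Cλⁿ`, `A_n = e^{iα_n}`, `T_n` the midpoint of `[A_n, A_{n+1}]`, `S_n` the point
of `[A_{n−1}, A_n]` with `‖A_n − S_n‖ = ‖A_n − T_n‖`, and `O_n` the center of the circle
tangent to the two segments at `S_n` and `T_n` with radius `r_n`, one has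
`r_n → 2λ/(1 + λ)`. -/
theorem radius_of_curvature_limit (l C : ℝ)
    (hl : l ∈ Set.Ioo (0 : ℝ) 1) (hC : 0 < C) (hCl : C * l ≤ Real.pi)
    (α : ℕ → ℝ) (hα : ∀ n, α n = C * l ^ n)
    (A : ℕ → ℂ) (hA : ∀ n, A n = Complex.exp (α n * Complex.I))
    (T : ℕ → ℂ) (hT : ∀ n, T n = (A n + A (n + 1)) / 2)
    (S : ℕ → ℂ)
    (hS : ∀ n, 1 ≤ n → S n ∈ segment ℝ (A (n - 1)) (A n) ∧ ‖A n - S n‖ = ‖A n - T n‖)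
    (O : ℕ → ℂ)
    (hO : ∀ n, 1 ≤ n →
      ((O n - S n) * starRingEnd ℂ (A n - A (n - 1))).re = 0 ∧
      ((O n - T n) * starRingEnd ℂ (A (n + 1) - A n)).re = 0)
    (r : ℕ → ℝ)
    (hr : ∀ n, 1 ≤ n → 0 < r n ∧ r n = ‖O n - S n‖ ∧ r n = ‖O n - T n‖) :
    Filter.Tendsto r Filter.atTop (nhds (2 * l / (1 + l))) :=
  radius_of_curvature_limit_general l C hl hC α hα A hA T hT S hS O hO r hr
end
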